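/- The q → 0 limit of the theta-ratio with fractional shift: for 0 < q < 1 real, x > 0, z > 0, and w ∈ ℝ \ ℤ, the limit as q → 0⁺ of θ(z·x·q^w)/θ(x·q^w) equals z^{-⌊w⌋ - 1/2}, where θ(x) = (x^{1/2} - x^{-1/2})∏_{i≥1}(1-q^i x)(1-q^i/x). -/

import Mathlib

open Real Filter Topology

/-- The real theta function
`θ_q(x) = (x^{1/2} - x^{-1/2}) ∏_{i≥1} (1 - qⁱ x)(1 - qⁱ/x)`. -/
noncomputable def thetaR (q x : ℝ) : ℝ :=
  (Real.sqrt x - 1 / Real.sqrt x) *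
    ∏' i : ℕ, (1 - q ^ (i + 1) * x) * (1 - q ^ (i + 1) / x)

/-!
Writing `θ_q(y) = (√y - 1/√y) (q y; q)_∞ (q/y; q)_∞`, the shift `(y; q)_∞ = (1 - y) (q y; q)_∞`
gives the quasi-periodicity `θ_q(q y) = -(√q y)⁻¹ θ_q(y)`, so `y ↦ θ_q(z y) / θ_q(y)` is multiplied
by `z⁻¹` under `y ↦ q y`. Splitting `q^w = q^⌊w⌋ q^f` with `f = fract w ∈ (0, 1)` leaves the ratio
at `y = x q^f`. There both `q y` and `q / y` tend to `0`, so both Pochhammer factors tend to `1`,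
`√y θ_q(y) → -1`, and the ratio tends to `z^{-1/2}`.
-/
section NormedRing

variable {ι R : Type*} [NormedCommRing R] [NormOneClass R] [CompleteSpace R] {f : ι → R}

lemma norm_tprod_one_add_sub_one_le (hf : Summable fun i ↦ ‖f i‖) :
    ‖∏' i, (1 + f i) - 1‖ ≤ Real.exp (∑' i, ‖f i‖) - 1 :=
  le_of_tendsto ((multipliable_one_add_of_summable hf).hasProd.sub_const 1).norm <|
    Eventually.of_forall fun s ↦ (s.norm_prod_one_add_sub_one_le f).trans <| by
      gcongr; exact hf.sum_le_tsum s fun i _ ↦ norm_nonneg _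

end NormedRing

section qPochhammer

variable {𝕜 : Type*} [NormedField 𝕜]

/-- The infinite `q`-Pochhammer symbol `(y; q)_∞`. -/
noncomputable def qPochhammer (q y : 𝕜) : 𝕜 := ∏' i : ℕ, (1 - q ^ i * y)

lemma summable_norm_pow_mul {q : 𝕜} (hq : ‖q‖ < 1) (y : 𝕜) :
    Summable fun i : ℕ ↦ ‖q ^ i * y‖ := by
  simpa [norm_mul, norm_pow] using
    (summable_geometric_of_lt_one (norm_nonneg q) hq).mul_right ‖y‖

variable [CompleteSpace 𝕜]

lemma multipliable_one_sub_pow_mul {q : 𝕜} (hq : ‖q‖ < 1) (y : 𝕜) :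
    Multipliable fun i : ℕ ↦ 1 - q ^ i * y := by
  simpa [sub_eq_add_neg] using
    multipliable_one_add_of_summable (f := fun i : ℕ ↦ -(q ^ i * y))
      (by simpa using summable_norm_pow_mul hq y)

lemma qPochhammer_eq_one_sub_mul {q : 𝕜} (hq : ‖q‖ < 1) (y : 𝕜) :
    qPochhammer q y = (1 - y) * qPochhammer q (q * y) := by
  have hshift : (fun i : ℕ ↦ 1 - q ^ (i + 1) * y) = fun i ↦ 1 - q ^ i * (q * y) := by
    ext i; ring
  rw [qPochhammer, tprod_eq_zero_mul' (by rw [hshift]; exact multipliable_one_sub_pow_mul hq _),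
    hshift, pow_zero, one_mul, qPochhammer]

lemma norm_qPochhammer_sub_one_le {q : 𝕜} (hq : ‖q‖ < 1) (y : 𝕜) :
    ‖qPochhammer q y - 1‖ ≤ Real.exp (‖y‖ / (1 - ‖q‖)) - 1 := by
  have hsum : HasSum (fun i : ℕ ↦ ‖-(q ^ i * y)‖) (‖y‖ / (1 - ‖q‖)) := by
    simpa [norm_mul, norm_pow, div_eq_inv_mul, mul_comm] using
      (hasSum_geometric_of_lt_one (norm_nonneg q) hq).mul_right ‖y‖
  have := norm_tprod_one_add_sub_one_le hsum.summable
  rw [hsum.tsum_eq] at this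
  simpa [qPochhammer, ← sub_eq_add_neg] using this

lemma tendsto_qPochhammer_one {α : Type*} {l : Filter α} {q y : α → 𝕜}
    (hq : Tendsto q l (𝓝 0)) (hy : Tendsto y l (𝓝 0)) :
    Tendsto (fun t ↦ qPochhammer (q t) (y t)) l (𝓝 1) := by
  have hq' : Tendsto (fun t ↦ ‖q t‖) l (𝓝 0) := by simpa using hq.norm
  have hbound : Tendsto (fun t ↦ Real.exp (‖y t‖ / (1 - ‖q t‖)) - 1) l (𝓝 0) := by
    simpa using ((hy.norm.div (tendsto_const_nhds.sub hq') (by simp)).rexp.sub_const 1)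
  rw [tendsto_iff_norm_sub_tendsto_zero]
  refine squeeze_zero' (Eventually.of_forall fun _ ↦ norm_nonneg _) ?_ hbound
  filter_upwards [hq'.eventually_lt_const one_pos] with t ht
  exact norm_qPochhammer_sub_one_le ht _

end qPochhammer

section Theta

variable {q : ℝ}

lemma thetaR_eq_mul_qPochhammer (hq : |q| < 1) (y : ℝ) :
    thetaR q y = (√y - 1 / √y) * (qPochhammer q (q * y) * qPochhammer q (q / y)) := by
  have hq' : ‖q‖ < 1 := by rwa [Real.norm_eq_abs]
  have hfac : ∀ (u : ℝ) (i : ℕ), q ^ (i + 1) * u = q ^ i * (q * u) := fun u i ↦ by ring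
  simp only [thetaR, qPochhammer, ← (multipliable_one_sub_pow_mul hq' _).tprod_mul
    (multipliable_one_sub_pow_mul hq' _), hfac, div_eq_mul_inv]

lemma thetaR_q_mul (hq0 : 0 < q) (hq1 : q < 1) {y : ℝ} (hy : 0 < y) :
    thetaR q (q * y) = -(√q * y)⁻¹ * thetaR q y := by
  have hq : ‖q‖ < 1 := by rwa [Real.norm_eq_abs, abs_of_pos hq0]
  have habs : |q| < 1 := by rwa [abs_of_pos hq0]
  rw [thetaR_eq_mul_qPochhammer habs, thetaR_eq_mul_qPochhammer habs,
    qPochhammer_eq_one_sub_mul hq (q * y), show q / (q * y) = y⁻¹ by field_simp,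
    qPochhammer_eq_one_sub_mul hq y⁻¹, ← div_eq_mul_inv]
  generalize qPochhammer q (q * (q * y)) = A, qPochhammer q (q / y) = B
  obtain ⟨s, hs, rfl⟩ : ∃ s, 0 < s ∧ q = s ^ 2 := ⟨√q, by positivity, (sq_sqrt hq0.le).symm⟩
  obtain ⟨t, ht, rfl⟩ : ∃ t, 0 < t ∧ y = t ^ 2 := ⟨√y, by positivity, (sq_sqrt hy.le).symm⟩
  rw [← mul_pow, sqrt_sq (by positivity), sqrt_sq hs.le, sqrt_sq ht.le]
  field_simp
  ring

lemma thetaR_ratio_q_mul (hq0 : 0 < q) (hq1 : q < 1) {z y : ℝ} (hz : 0 < z) (hy : 0 < y) :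
    thetaR q (z * (q * y)) / thetaR q (q * y) = z⁻¹ * (thetaR q (z * y) / thetaR q y) := by
  have hc : -(√q * y)⁻¹ ≠ 0 := neg_ne_zero.mpr (by have := sqrt_pos.mpr hq0; positivity)
  rw [mul_left_comm, thetaR_q_mul hq0 hq1 (mul_pos hz hy), thetaR_q_mul hq0 hq1 hy,
    show -(√q * (z * y))⁻¹ = z⁻¹ * -(√q * y)⁻¹ by field_simp, mul_assoc,
    mul_div_assoc, mul_div_mul_left _ _ hc]

end Theta

lemma apply_zpow_mul_of_apply_mul {f : ℝ → ℝ} {q c : ℝ} (hq : 0 < q) (hc : c ≠ 0)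
    (hf : ∀ y, 0 < y → f (q * y) = c * f y) (n : ℤ) {y : ℝ} (hy : 0 < y) :
    f (q ^ n * y) = c ^ n * f y := by
  have hstep (m : ℤ) : f (q ^ (m + 1) * y) = c * f (q ^ m * y) := by
    rw [zpow_add_one₀ hq.ne', mul_comm _ q, mul_assoc, hf _ (by positivity)]
  induction n with
  | zero => simp
  | succ i ih => rw [hstep, ih, zpow_add_one₀ hc, mul_comm _ c, mul_assoc]
  | pred i ih =>
    have h := hstep (-i - 1)
    rw [sub_add_cancel, ih] at h
    rw [zpow_sub_one₀ hc, mul_comm _ c⁻¹, mul_assoc, h, inv_mul_cancel_left₀ hc]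

section Limits

variable {α : Type*} {l : Filter α} {q y : α → ℝ}

lemma tendsto_sqrt_mul_thetaR (hq : Tendsto q l (𝓝 0)) (hy : Tendsto y l (𝓝 0))
    (hy0 : ∀ᶠ t in l, 0 < y t) (hqy : Tendsto (fun t ↦ q t / y t) l (𝓝 0)) :
    Tendsto (fun t ↦ √(y t) * thetaR (q t) (y t)) l (𝓝 (-1)) := by
  have hlim : Tendsto (fun t ↦ (y t - 1) *
      (qPochhammer (q t) (q t * y t) * qPochhammer (q t) (q t / y t))) l (𝓝 ((0 - 1) * (1 * 1))) :=
    (hy.sub_const 1).mul ((tendsto_qPochhammer_one hq (by simpa using hq.mul hy)).mul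
      (tendsto_qPochhammer_one hq hqy))
  rw [show ((0:ℝ) - 1) * (1 * 1) = -1 by norm_num] at hlim
  have hq1 : ∀ᶠ t in l, |q t| < 1 :=
    (by simpa using hq.abs : Tendsto (fun t ↦ |q t|) l (𝓝 0)).eventually_lt_const one_pos
  refine hlim.congr' ?_
  filter_upwards [hy0, hq1] with t hyt hqt
  rw [thetaR_eq_mul_qPochhammer hqt, ← mul_assoc (√(y t)), mul_sub, mul_self_sqrt hyt.le,
    mul_one_div_cancel (sqrt_pos.mpr hyt).ne']

lemma tendsto_thetaR_mul_div_thetaR {z : ℝ} (hz : 0 < z) (hq : Tendsto q l (𝓝 0))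
    (hy : Tendsto y l (𝓝 0)) (hy0 : ∀ᶠ t in l, 0 < y t)
    (hqy : Tendsto (fun t ↦ q t / y t) l (𝓝 0)) :
    Tendsto (fun t ↦ thetaR (q t) (z * y t) / thetaR (q t) (y t)) l (𝓝 (√z)⁻¹) := by
  have hzy := tendsto_sqrt_mul_thetaR hq (by simpa using hy.const_mul z)
    (hy0.mono fun t h ↦ mul_pos hz h) (by simpa [div_div, mul_comm] using hqy.div_const z)
  have hlim := (hzy.div (tendsto_sqrt_mul_thetaR hq hy hy0 hqy) (by norm_num)).mul_const (√z)⁻¹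
  rw [div_self (by norm_num), one_mul] at hlim
  refine hlim.congr' ?_
  filter_upwards [hy0] with t hyt
  have hsz : √z ≠ 0 := (sqrt_pos.mpr hz).ne'
  rw [Pi.div_apply, sqrt_mul hz.le, mul_comm √z, mul_assoc,
    mul_div_mul_left _ _ (sqrt_pos.mpr hyt).ne', mul_div_assoc, mul_comm, inv_mul_cancel_left₀ hsz]

end Limits

lemma tendsto_rpow_nhdsGT_zero {p : ℝ} (hp : 0 < p) : Tendsto (· ^ p) (𝓝[>] (0 : ℝ)) (𝓝 0) :=
  ((continuous_rpow_const hp.le).tendsto' 0 0 (zero_rpow hp.ne')).mono_left nhdsWithin_le_nhds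

lemma tendsto_thetaR_ratio_rpow {x z f : ℝ} (hx : 0 < x) (hz : 0 < z) (hf0 : 0 < f)
    (hf1 : f < 1) :
    Tendsto (fun q ↦ thetaR q (z * (x * q ^ f)) / thetaR q (x * q ^ f)) (𝓝[>] 0) (𝓝 (√z)⁻¹) := by
  refine tendsto_thetaR_mul_div_thetaR hz (tendsto_id.mono_left nhdsWithin_le_nhds)
    (by simpa using (tendsto_rpow_nhdsGT_zero hf0).const_mul x) ?_ ?_
  · filter_upwards [self_mem_nhdsWithin] with q hq using mul_pos hx (rpow_pos_of_pos hq f)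
  · refine (by simpa using (tendsto_rpow_nhdsGT_zero (sub_pos.mpr hf1)).const_mul x⁻¹ :
      Tendsto (fun q : ℝ ↦ x⁻¹ * q ^ (1 - f)) _ _).congr' ?_
    filter_upwards [self_mem_nhdsWithin] with q (hq : 0 < q)
    rw [rpow_sub hq, rpow_one]
    field_simp

/-- The `q → 0⁺` limit of the theta ratio with a fractional shift `w ∉ ℤ`:
`lim_{q→0⁺} θ_q(z x q^w)/θ_q(x q^w) = z^{-⌊w⌋ - 1/2}`. -/
theorem theta_ratio_limit_fractional (x z w : ℝ) (hx : 0 < x) (hz : 0 < z)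
    (hw : ∀ n : ℤ, w ≠ n) :
    Tendsto (fun q : ℝ => thetaR q (z * x * q ^ w) / thetaR q (x * q ^ w))
      (nhdsWithin 0 (Set.Ioi 0)) (nhds (z ^ (-(⌊w⌋ : ℝ) - 1 / 2))) := by
  have hlim := tendsto_thetaR_ratio_rpow hx hz (Int.fract_pos.mpr (hw ⌊w⌋)) (Int.fract_lt_one w)
  have hvalue : (z⁻¹) ^ ⌊w⌋ * (√z)⁻¹ = z ^ (-(⌊w⌋ : ℝ) - 1 / 2) := by
    rw [sub_eq_add_neg, rpow_add hz, rpow_neg hz.le, rpow_neg hz.le, ← sqrt_eq_rpow, rpow_intCast,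
      inv_zpow]
  rw [← hvalue]
  refine (hlim.const_mul _).congr' ?_
  filter_upwards [Ioo_mem_nhdsGT one_pos] with q ⟨hq, hq1⟩
  have hqw : q ^ w = q ^ ⌊w⌋ * q ^ Int.fract w := by
    rw [← rpow_intCast, ← rpow_add hq, Int.floor_add_fract]
  rw [show z * x * q ^ w = z * (q ^ ⌊w⌋ * (x * q ^ Int.fract w)) by rw [hqw]; ring,
    show x * q ^ w = q ^ ⌊w⌋ * (x * q ^ Int.fract w) by rw [hqw]; ring]
  exact (apply_zpow_mul_of_apply_mul (f := fun y ↦ thetaR q (z * y) / thetaR q y) hq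
    (inv_ne_zero hz.ne') (fun y hy ↦ thetaR_ratio_q_mul hq hq1 hz hy) ⌊w⌋
    (mul_pos hx (rpow_pos_of_pos hq _))).symm
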